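/- arXiv:2406.01804 — 4 statements merged into one kernel-verified Lean document; each statement's English description precedes it below -/
import Mathlib

section
/- Let β, K > 0 and γ, δ ≥ 0, and let t₀ ∈ ℝ. Suppose η : [t₀, ∞) → ℝ is differentiable, η(t) ≥ 0 for all t ≥ t₀, and η satisfies the ODE η'(t) = −β·η(t) + γ·exp(−K·t)·η(t) + δ·exp(−K·t)·√(η(t)) for all t ≥ t₀. Then η(t) → 0 as t → ∞ (for every nonnegative initial condition η(t₀) = η₀). -/
/-- Lemma 4 of the paper: global asymptotic stability of the scalar ODE
`η' = -β η + γ e^{-Kt} η + δ e^{-Kt} √η`. -/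
theorem scalar_ode_global_asymptotic_stability
    (β K γ δ t₀ : ℝ) (hβ : 0 < β) (hK : 0 < K) (hγ : 0 ≤ γ) (hδ : 0 ≤ δ)
    (η : ℝ → ℝ)
    (hnn : ∀ t, t₀ ≤ t → 0 ≤ η t)
    (hode : ∀ t, t₀ ≤ t →
      HasDerivAt η
        (-β * η t + γ * Real.exp (-K * t) * η t
          + δ * Real.exp (-K * t) * Real.sqrt (η t)) t) :
    Filter.Tendsto η Filter.atTop (nhds 0) := by
  rw [Metric.tendsto_nhds]
  intro ε hε
  have hε2 : (0:ℝ) < ε / 2 := by linarith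
  have hsε : 0 < Real.sqrt (ε / 2) := Real.sqrt_pos.2 hε2
  set c : ℝ := γ + δ / Real.sqrt (ε / 2) with hc
  have hc0 : 0 ≤ c := by positivity
  -- exp (-K t) → 0
  have hexp0 : Filter.Tendsto (fun t : ℝ => Real.exp (-K * t)) Filter.atTop (nhds 0) := by
    have hKt : Filter.Tendsto (fun t : ℝ => K * t) Filter.atTop Filter.atTop :=
      Filter.Tendsto.const_mul_atTop hK Filter.tendsto_id
    have h2 := Real.tendsto_exp_neg_atTop_nhds_zero.comp hKt
    simp only [Function.comp_def, neg_mul] at h2 ⊢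
    exact h2
  have hexp : Filter.Tendsto (fun t : ℝ => Real.exp (-K * t) * c) Filter.atTop (nhds 0) := by
    simpa using hexp0.mul_const c
  obtain ⟨T, hTt₀, hT⟩ : ∃ T, t₀ ≤ T ∧ Real.exp (-K * T) * c ≤ β / 2 := by
    have h1 := (hexp.eventually (gt_mem_nhds (show (0:ℝ) < β / 2 by positivity))).and
      (Filter.eventually_ge_atTop t₀)
    obtain ⟨T, hT1, hT2⟩ := h1.exists
    exact ⟨T, hT2, hT1.le⟩
  -- the barrier function
  set B : ℝ → ℝ := fun t => ε / 2 + η T * Real.exp (-(β / 2) * (t - T)) with hBdef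
  set B' : ℝ → ℝ := fun t => η T * (Real.exp (-(β / 2) * (t - T)) * -(β / 2)) with hB'def
  have hηT0 : 0 ≤ η T := hnn T hTt₀
  have hBder : ∀ x, HasDerivAt B (B' x) x := by
    intro x
    have h1 : HasDerivAt (fun t : ℝ => -(β / 2) * (t - T)) (-(β / 2)) x := by
      simpa using ((hasDerivAt_id x).sub_const T).const_mul (-(β / 2))
    exact ((h1.exp).const_mul (η T)).const_add (ε / 2)
  -- the key comparison
  have key : ∀ t, T ≤ t → η t ≤ B t := by
    intro b hb
    have hcont : ContinuousOn η (Set.Icc T b) := fun x hx =>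
      ((hode x (hTt₀.trans hx.1)).continuousAt).continuousWithinAt
    have hder : ∀ x ∈ Set.Ico T b,
        HasDerivWithinAt η
          (-β * η x + γ * Real.exp (-K * x) * η x
            + δ * Real.exp (-K * x) * Real.sqrt (η x)) (Set.Ici x) x := fun x hx =>
      (hode x (hTt₀.trans hx.1)).hasDerivWithinAt
    have haT : η T ≤ B T := by
      simp [hBdef]
      positivity
    have bound : ∀ x ∈ Set.Ico T b, η x = B x →
        -β * η x + γ * Real.exp (-K * x) * η x
          + δ * Real.exp (-K * x) * Real.sqrt (η x) < B' x := by
      intro x hx hxB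
      have hexpnn : (0:ℝ) ≤ η T * Real.exp (-(β / 2) * (x - T)) := by positivity
      have hηx : ε / 2 ≤ η x := by rw [hxB]; simp only [hBdef]; linarith
      have hηx0 : 0 ≤ η x := le_trans hε2.le hηx
      have hsqrt : Real.sqrt (η x) ≤ η x / Real.sqrt (ε / 2) := by
        rw [le_div_iff₀ hsε]
        calc Real.sqrt (η x) * Real.sqrt (ε / 2)
            ≤ Real.sqrt (η x) * Real.sqrt (η x) := by
              have := Real.sqrt_le_sqrt hηx
              nlinarith [Real.sqrt_nonneg (η x)]
          _ = η x := Real.mul_self_sqrt hηx0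
      have hexpx : Real.exp (-K * x) * c ≤ β / 2 := by
        refine le_trans (mul_le_mul_of_nonneg_right ?_ hc0) hT
        exact Real.exp_le_exp.2 (by nlinarith [hx.1])
      have e0 : (0:ℝ) < Real.exp (-K * x) := Real.exp_pos _
      have h1 : -β * η x + γ * Real.exp (-K * x) * η x
          + δ * Real.exp (-K * x) * Real.sqrt (η x) ≤ -(β / 2) * η x := by
        have h2 : δ * Real.exp (-K * x) * Real.sqrt (η x)
            ≤ δ * Real.exp (-K * x) * (η x / Real.sqrt (ε / 2)) := by
          apply mul_le_mul_of_nonneg_left hsqrt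
          positivity
        have h3 : γ * Real.exp (-K * x) * η x
            + δ * Real.exp (-K * x) * (η x / Real.sqrt (ε / 2))
            = (Real.exp (-K * x) * c) * η x := by
          simp only [hc]; field_simp
        have h4 : (Real.exp (-K * x) * c) * η x ≤ (β / 2) * η x :=
          mul_le_mul_of_nonneg_right hexpx hηx0
        linarith
      have h5 : B' x = -(β / 2) * (B x - ε / 2) := by
        simp only [hB'def, hBdef]; ring
      calc -β * η x + γ * Real.exp (-K * x) * η x
          + δ * Real.exp (-K * x) * Real.sqrt (η x)
          ≤ -(β / 2) * η x := h1
        _ = -(β / 2) * B x := by rw [hxB]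
        _ < -(β / 2) * (B x - ε / 2) := by nlinarith
        _ = B' x := h5.symm
    exact image_le_of_deriv_right_lt_deriv_boundary hcont hder haT hBder bound
      (Set.right_mem_Icc.2 hb)
  -- conclude
  have htail : Filter.Tendsto B Filter.atTop (nhds (ε / 2)) := by
    have hid : Filter.Tendsto (fun t : ℝ => t - T) Filter.atTop Filter.atTop :=
      Filter.tendsto_atTop_add_const_right _ (-T) Filter.tendsto_id
    have h2 : Filter.Tendsto (fun t : ℝ => η T * Real.exp (-(β / 2) * (t - T)))
        Filter.atTop (nhds 0) := by
      have hbt : Filter.Tendsto (fun t : ℝ => (β / 2) * (t - T)) Filter.atTop Filter.atTop :=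
        Filter.Tendsto.const_mul_atTop (by positivity : (0:ℝ) < β / 2) hid
      have h3 := (Real.tendsto_exp_neg_atTop_nhds_zero.comp hbt).const_mul (η T)
      simp only [Function.comp_def, neg_mul, mul_zero, zero_mul] at h3 ⊢
      simpa [mul_comm] using h3
    have := h2.const_add (ε / 2)
    simpa [hBdef] using this
  have hlt : ∀ᶠ t in Filter.atTop, B t < ε :=
    htail.eventually (gt_mem_nhds (by linarith : ε / 2 < ε))
  filter_upwards [Filter.eventually_ge_atTop T, hlt] with t ht1 ht2
  rw [Real.dist_eq, sub_zero, abs_of_nonneg (hnn t (hTt₀.trans ht1))]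
  exact lt_of_le_of_lt (key t ht1) ht2
end

section
/- Let β, K > 0 and γ, δ ≥ 0, and let t₀ ∈ ℝ. Suppose V : [t₀, ∞) → ℝ is differentiable, V(t) ≥ 0 for all t ≥ t₀, and V satisfies the differential inequality V'(t) ≤ −β·V(t) + γ·exp(−K·t)·V(t) + δ·exp(−K·t)·√(V(t)) for all t ≥ t₀. Then V(t) → 0 as t → ∞. -/
open Real Filter Set Topology

/-!
Since `√V ≤ (V + 1) / 2` and `e^{-Kt} → 0`, for large `t` the inequality becomes
`V' ≤ -μ V + (δ / 2) e^{-Kt}` with `0 < μ < K`. Then `e^{μt} V + (δ / 2) / (K - μ) e^{(μ - K)t}`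
is nonincreasing, so `V = O(e^{-μt})`.
-/

theorem antitoneOn_exp_mul_add_of_deriv_le {μ K C T : ℝ} {V : ℝ → ℝ} (hμK : μ ≠ K)
    (hdiff : ∀ t ∈ Ici T, DifferentiableAt ℝ V t)
    (hV : ∀ t ∈ Ici T, deriv V t ≤ -μ * V t + C * exp (-K * t)) :
    AntitoneOn (fun t ↦ exp (μ * t) * V t + C / (K - μ) * exp ((μ - K) * t)) (Ici T) := by
  have hderiv : ∀ t ∈ Ici T, HasDerivAt
      (fun t ↦ exp (μ * t) * V t + C / (K - μ) * exp ((μ - K) * t))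
      (exp (μ * t) * (deriv V t + μ * V t - C * exp (-K * t))) t := by
    intro t ht
    have hexp : ∀ a : ℝ, HasDerivAt (fun t ↦ exp (a * t)) (exp (a * t) * a) t := fun a ↦
      ((hasDerivAt_id t).const_mul a).exp.congr_deriv (by simp)
    refine (((hexp μ).mul (hdiff t ht).hasDerivAt).add
      ((hexp (μ - K)).const_mul (C / (K - μ)))).congr_deriv ?_
    rw [sub_mul, exp_sub, neg_mul, exp_neg]
    field_simp [sub_ne_zero.2 hμK.symm]
    ring
  refine antitoneOn_of_hasDerivWithinAt_nonpos (convex_Ici T)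
    (fun t ht ↦ (hderiv t ht).continuousAt.continuousWithinAt)
    (fun t ht ↦ (hderiv t (interior_subset ht)).hasDerivWithinAt) fun t ht ↦ ?_
  have := hV t (interior_subset ht)
  exact mul_nonpos_of_nonneg_of_nonpos (exp_pos _).le (by linarith)

theorem tendsto_zero_of_deriv_le_neg_mul_add_mul_exp {μ K C : ℝ} {V : ℝ → ℝ}
    (hμ : 0 < μ) (hμK : μ < K) (hC : 0 ≤ C)
    (hV : ∀ᶠ t in atTop, DifferentiableAt ℝ V t ∧ 0 ≤ V t ∧
      deriv V t ≤ -μ * V t + C * exp (-K * t)) :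
    Tendsto V atTop (𝓝 0) := by
  obtain ⟨T, hT⟩ := eventually_atTop.1 hV
  set g := fun t ↦ exp (μ * t) * V t + C / (K - μ) * exp ((μ - K) * t)
  have hg : AntitoneOn g (Ici T) := antitoneOn_exp_mul_add_of_deriv_le hμK.ne
    (fun t ht ↦ (hT t ht).1) (fun t ht ↦ (hT t ht).2.2)
  have hbound : ∀ t ≥ T, V t ≤ g T * exp (-μ * t) := by
    intro t ht
    have hgt : exp (μ * t) * V t ≤ g T := by
      have : 0 ≤ C / (K - μ) * exp ((μ - K) * t) :=
        mul_nonneg (div_nonneg hC (sub_pos.2 hμK).le) (exp_pos _).le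
      linarith [hg self_mem_Ici ht ht]
    calc V t = exp (μ * t) * V t * exp (-μ * t) := by
          rw [mul_comm, ← mul_assoc, ← exp_add]; simp
      _ ≤ g T * exp (-μ * t) := mul_le_mul_of_nonneg_right hgt (exp_pos _).le
  have hdecay : Tendsto (fun t ↦ g T * exp (-μ * t)) atTop (𝓝 0) := by
    simpa using (tendsto_exp_neg_atTop_nhds_zero.comp
      (tendsto_id.const_mul_atTop hμ)).const_mul (g T)
  exact squeeze_zero' (eventually_atTop.2 ⟨T, fun t ht ↦ (hT t ht).2.1⟩)
    (eventually_atTop.2 ⟨T, hbound⟩) hdecay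

theorem scalar_diff_ineq_tendsto_zero_general
    (β K γ δ t₀ : ℝ) (hβ : 0 < β) (hK : 0 < K) (hδ : 0 ≤ δ)
    (V : ℝ → ℝ)
    (hdiff : ∀ t, t₀ ≤ t → DifferentiableAt ℝ V t)
    (hnn : ∀ t, t₀ ≤ t → 0 ≤ V t)
    (hineq : ∀ t, t₀ ≤ t →
      deriv V t ≤ -β * V t + γ * Real.exp (-K * t) * V t
        + δ * Real.exp (-K * t) * Real.sqrt (V t)) :
    Filter.Tendsto V Filter.atTop (nhds 0) := by
  have hdecay : Tendsto (fun t ↦ (γ + δ / 2) * exp (-K * t)) atTop (𝓝 0) := by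
    simpa using (tendsto_exp_neg_atTop_nhds_zero.comp
      (tendsto_id.const_mul_atTop hK)).const_mul (γ + δ / 2)
  have hsmall := hdecay.eventually_lt_const (half_pos hβ)
  refine tendsto_zero_of_deriv_le_neg_mul_add_mul_exp (μ := min (β / 2) (K / 2)) (C := δ / 2)
    (by positivity) (min_lt_of_right_lt (half_lt_self hK)) (by positivity) ?_
  filter_upwards [eventually_ge_atTop t₀, hsmall] with t ht hsmall
  refine ⟨hdiff t ht, hnn t ht, ?_⟩
  have hV := hnn t ht
  have hsqrt : √(V t) ≤ (V t + 1) / 2 := by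
    nlinarith [sq_sqrt hV, sq_nonneg (√(V t) - 1)]
  calc deriv V t
      ≤ -β * V t + γ * exp (-K * t) * V t + δ * exp (-K * t) * ((V t + 1) / 2) := by
        grw [hineq t ht, hsqrt]
    _ = -β * V t + (γ + δ / 2) * exp (-K * t) * V t + δ / 2 * exp (-K * t) := by ring
    _ ≤ -min (β / 2) (K / 2) * V t + δ / 2 * exp (-K * t) := by
        nlinarith [min_le_left (β / 2) (K / 2)]

/-- Lemma 4 combined with the comparison lemma: any nonnegative differentiable
function satisfying the differential inequality
`V' ≤ -β V + γ e^{-Kt} V + δ e^{-Kt} √V` converges to zero. -/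
theorem scalar_diff_ineq_tendsto_zero
    (β K γ δ t₀ : ℝ) (hβ : 0 < β) (hK : 0 < K) (hγ : 0 ≤ γ) (hδ : 0 ≤ δ)
    (V : ℝ → ℝ)
    (hdiff : ∀ t, t₀ ≤ t → DifferentiableAt ℝ V t)
    (hnn : ∀ t, t₀ ≤ t → 0 ≤ V t)
    (hineq : ∀ t, t₀ ≤ t →
      deriv V t ≤ -β * V t + γ * Real.exp (-K * t) * V t
        + δ * Real.exp (-K * t) * Real.sqrt (V t)) :
    Filter.Tendsto V Filter.atTop (nhds 0) :=
  scalar_diff_ineq_tendsto_zero_general β K γ δ t₀ hβ hK hδ V hdiff hnn hineq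
end

section
/- Let D > 0, L > 0 and M^F ∈ (0,1), and set M^L = 1 − M^F. Let ρ̂ : ℝ → ℝ be 2π-periodic, strictly positive and twice continuously differentiable with ∫_{−π}^{π} ρ̂(x) dx = 1, and set ρ̄^F = M^F·ρ̂. Define g₁(x) = (ρ̂'(x)/ρ̂(x))', g₂(x) = log ρ̂(x), C = ∫_{−π}^{π} log ρ̂(x) dx, and h(x) = −π·D·g₁(x) + (π·D/L²)·g₂(x) − D·C/(2·L²). Then there exists a 2π-periodic continuous function ρ̄^L : ℝ → ℝ with ρ̄^L(x) ≥ 0 for all x and ∫_{−π}^{π} ρ̄^L(x) dx = M^L such that (ρ̄^F·(f*ρ̄^L))'(x) = D·ρ̄^F''(x) for all x, if and only if M^L ≥ max_{x ∈ [−π,π]} h(x). -/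
/-- The repulsive interaction kernel on `[-π, π]` with characteristic length `L`:
`f(x) = sgn(x)/(e^{2π/L} - 1) · [e^{(2π-|x|)/L} - e^{|x|/L}]`. -/
noncomputable def repKernel (L x : ℝ) : ℝ :=
  Real.sign x / (Real.exp (2 * Real.pi / L) - 1) *
    (Real.exp ((2 * Real.pi - |x|) / L) - Real.exp (|x| / L))

/-- Wrap a real number to the fundamental domain `[-π, π)`. -/
noncomputable def wrap (x : ℝ) : ℝ :=
  2 * Real.pi * Int.fract ((x + Real.pi) / (2 * Real.pi)) - Real.pi

/-- The 2π-periodic extension of the repulsive kernel. -/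
noncomputable def perKernel (L x : ℝ) : ℝ := repKernel L (wrap x)

open Real Set Function intervalIntegral
open MeasureTheory (volume)

/-!
The kernel solves `f'' = f / L²` on `(0, 2π)` and jumps by `2` at `0`. Hence for a continuous
periodic `g` the field `V = f * g` is `C¹`, with `V' = 2 g + W` and `W' = V / L²` for a periodic
companion `W`; in particular `V` has mean zero. For a steady state the flux `ρ̂ V - D ρ̂'` is
constant, and integrating `V = k / ρ̂ + D ρ̂' / ρ̂` over a period forces `k = 0`, i.e.
`V = D ρ̂' / ρ̂`. Inverting the two first-order relations gives
`ρ̄^L = (D/2) (ρ̂'/ρ̂)' - D/(2L²) log ρ̂ + c`; conversely every such `ρ̄^L` works, because a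
periodic solution of `u'' = u / L²` vanishes. The mass fixes `c`, and then `2π ρ̄^L = M^L - h`, so
`ρ̄^L ≥ 0` exactly when `max h ≤ M^L`.
-/

lemma Function.Periodic.deriv {f : ℝ → ℝ} {T : ℝ} (hp : Periodic f T) : Periodic (deriv f) T :=
  fun x => by rw [← deriv_comp_add_const, funext hp]

lemma Function.Periodic.logDeriv {ρ : ℝ → ℝ} {T : ℝ} (hp : Periodic ρ T) :
    Periodic (logDeriv ρ) T :=
  fun x => by simp only [logDeriv_apply, hp.deriv x, hp x]

lemma Function.Periodic.integral_deriv_eq_zero {F F' : ℝ → ℝ} (hp : Periodic F (2 * π))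
    (hF : ∀ x, HasDerivAt F (F' x) x) (hF' : IntervalIntegrable F' volume (-π) π) :
    ∫ x in (-π)..π, F' x = 0 := by
  rw [integral_eq_sub_of_hasDerivAt (fun x _ => hF x) hF', ← hp (-π)]
  ring_nf

lemma Function.Periodic.eq_zero_of_hasDerivAt_mul {q : ℝ → ℝ} {c T : ℝ} (hp : Periodic q T)
    (hc : c ≠ 0) (hT : T ≠ 0) (hq : ∀ x, HasDerivAt q (c * q x) x) (x : ℝ) : q x = 0 := by
  have hder (x : ℝ) : HasDerivAt (fun x => exp (-c * x) * q x) 0 x :=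
    (((hasDerivAt_id' x).const_mul (-c)).exp.mul (hq x)).congr_deriv (by ring)
  have hconst := is_const_of_deriv_eq_zero (fun x => (hder x).differentiableAt)
    (fun x => (hder x).deriv) (x + T) x
  have hne : exp (-c * (x + T)) ≠ exp (-c * x) := by
    rw [Ne, exp_eq_exp]
    intro h
    exact mul_ne_zero hc hT (by linarith)
  by_contra hqx
  exact hne (mul_right_cancel₀ hqx (by rwa [hp] at hconst))

lemma Function.Periodic.eq_zero_of_hasDerivAt_sq_mul {u z : ℝ → ℝ} {μ T : ℝ} (hp : Periodic u T)
    (hμ : μ ≠ 0) (hT : T ≠ 0) (hu : ∀ x, HasDerivAt u (z x) x)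
    (hz : ∀ x, HasDerivAt z (μ ^ 2 * u x) x) (x : ℝ) : u x = 0 := by
  have hzp : Periodic z T := fun x =>
    (hu (x + T)).deriv.symm.trans ((hp.deriv x).trans (hu x).deriv)
  have hsum : ∀ x, z x + μ * u x = 0 :=
    Periodic.eq_zero_of_hasDerivAt_mul (q := fun x => z x + μ * u x)
      (fun x => by simp only [hzp x, hp x]) hμ hT
      (fun x => ((hz x).add ((hu x).const_mul μ)).congr_deriv (by ring))
  refine hp.eq_zero_of_hasDerivAt_mul (neg_ne_zero.2 hμ) hT (fun x => (hu x).congr_deriv ?_) x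
  linear_combination hsum x

noncomputable def expPair (μ α β s : ℝ) : ℝ := α * exp (μ * s) + β * exp (-μ * s)

@[fun_prop]
lemma continuous_expPair (μ α β : ℝ) : Continuous (expPair μ α β) := by
  unfold expPair; fun_prop

lemma expPair_neg (μ α β s : ℝ) : expPair μ α β (-s) = expPair μ β α s := by
  simp only [expPair, mul_neg, neg_mul, neg_neg]; ring

lemma expPair_zero (μ α β : ℝ) : expPair μ α β 0 = α + β := by
  simp [expPair]

noncomputable def windowConv (c g : ℝ → ℝ) (a b x : ℝ) : ℝ :=
  ∫ y in (x + a)..(x + b), c (x - y) * g y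

section WindowConv

variable {g : ℝ → ℝ}

lemma hasDerivAt_integral_window {h : ℝ → ℝ} (hh : Continuous h) (a b x : ℝ) :
    HasDerivAt (fun x => ∫ y in (x + a)..(x + b), h y) (h (x + b) - h (x + a)) x := by
  have hG (t : ℝ) : HasDerivAt (fun t => ∫ y in (0 : ℝ)..t, h y) (h t) t :=
    (hh.integral_hasStrictDerivAt 0 t).hasDerivAt
  have hsub : (fun x => ∫ y in (x + a)..(x + b), h y)
      = fun x => (∫ y in (0 : ℝ)..(x + b), h y) - ∫ y in (0 : ℝ)..(x + a), h y :=
    funext fun x => (integral_interval_sub_left (hh.intervalIntegrable _ _)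
      (hh.intervalIntegrable _ _)).symm
  rw [hsub]
  exact ((hG _).comp_add_const x b).sub ((hG _).comp_add_const x a)

lemma hasDerivAt_windowConv_exp (hg : Continuous g) (μ a b x : ℝ) :
    HasDerivAt (windowConv (fun s => exp (μ * s)) g a b)
      (exp (μ * -b) * g (x + b) - exp (μ * -a) * g (x + a)
        + μ * windowConv (fun s => exp (μ * s)) g a b x) x := by
  have hcont : Continuous fun y => exp (-μ * y) * g y := by fun_prop
  have hsplit : windowConv (fun s => exp (μ * s)) g a b
      = fun x => exp (μ * x) * ∫ y in (x + a)..(x + b), exp (-μ * y) * g y := by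
    ext x
    rw [windowConv, ← integral_const_mul]
    congr 1 with y
    rw [← mul_assoc, ← exp_add]
    ring_nf
  have h := ((hasDerivAt_id' x).const_mul μ).exp.fun_mul (hasDerivAt_integral_window hcont a b x)
  rw [hsplit]
  have hexp (t : ℝ) : exp (μ * -t) = exp (μ * x) * exp (-μ * (x + t)) := by
    rw [← exp_add]; ring_nf
  refine h.congr_deriv ?_
  rw [hexp a, hexp b]
  ring

lemma windowConv_periodic {c : ℝ → ℝ} {T : ℝ} (hp : Periodic g T) (a b : ℝ) :
    Periodic (windowConv c g a b) T := by
  intro x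
  simp only [windowConv, add_right_comm x T]
  rw [← integral_comp_add_right]
  congr 1 with y
  rw [hp]; ring_nf

lemma windowConv_expPair (hg : Continuous g) (μ α β a b : ℝ) :
    windowConv (expPair μ α β) g a b = fun x =>
      α * windowConv (fun s => exp (μ * s)) g a b x
        + β * windowConv (fun s => exp (-μ * s)) g a b x := by
  ext x
  simp only [windowConv, expPair, add_mul, mul_assoc]
  rw [integral_add, integral_const_mul, integral_const_mul] <;>
    exact (Continuous.intervalIntegrable (by fun_prop) _ _)

lemma hasDerivAt_windowConv_expPair (hg : Continuous g) (μ α β a b x : ℝ) :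
    HasDerivAt (windowConv (expPair μ α β) g a b)
      (expPair μ α β (-b) * g (x + b) - expPair μ α β (-a) * g (x + a)
        + windowConv (expPair μ (μ * α) (-μ * β)) g a b x) x := by
  rw [windowConv_expPair hg, windowConv_expPair hg]
  refine (((hasDerivAt_windowConv_exp hg μ a b x).const_mul α).add
    ((hasDerivAt_windowConv_exp hg (-μ) a b x).const_mul β)).congr_deriv ?_
  simp only [expPair]
  ring

lemma windowConv_const_mul (c : ℝ → ℝ) (k a b x : ℝ) :
    windowConv (fun s => k * c s) g a b x = k * windowConv c g a b x := by
  simp only [windowConv, mul_assoc, integral_const_mul]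

end WindowConv

/-- Convolution over `[x - π, x + π]` with the odd kernel equal to `expPair μ α β` on `(0, π)`. -/
noncomputable def oddConv (μ α β : ℝ) (g : ℝ → ℝ) (x : ℝ) : ℝ :=
  windowConv (expPair μ α β) g (-π) 0 x + windowConv (expPair μ (-β) (-α)) g 0 π x

/-- Convolution over `[x - π, x + π]` with the even kernel equal to `expPair μ α β` on `(0, π)`. -/
noncomputable def evenConv (μ α β : ℝ) (g : ℝ → ℝ) (x : ℝ) : ℝ :=
  windowConv (expPair μ α β) g (-π) 0 x + windowConv (expPair μ β α) g 0 π x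

section OddEvenConv

variable {g : ℝ → ℝ}

lemma oddConv_periodic {T : ℝ} (hp : Periodic g T) (μ α β : ℝ) :
    Periodic (oddConv μ α β g) T := fun x => by
  simp only [oddConv, windowConv_periodic hp _ _ x]

lemma evenConv_periodic {T : ℝ} (hp : Periodic g T) (μ α β : ℝ) :
    Periodic (evenConv μ α β g) T := fun x => by
  simp only [evenConv, windowConv_periodic hp _ _ x]

lemma oddConv_const_mul (μ α β k x : ℝ) :
    oddConv μ (k * α) (k * β) g x = k * oddConv μ α β g x := by
  have h₁ : expPair μ (k * α) (k * β) = fun s => k * expPair μ α β s :=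
    funext fun s => by simp only [expPair]; ring
  have h₂ : expPair μ (-(k * β)) (-(k * α)) = fun s => k * expPair μ (-β) (-α) s :=
    funext fun s => by simp only [expPair]; ring
  rw [oddConv, oddConv, h₁, h₂, windowConv_const_mul, windowConv_const_mul, mul_add]

lemma hasDerivAt_oddConv (hg : Continuous g) (hp : Periodic g (2 * π)) (μ α β x : ℝ) :
    HasDerivAt (oddConv μ α β g)
      (2 * (α + β) * g x - 2 * expPair μ α β π * g (x - π)
        + evenConv μ (μ * α) (-μ * β) g x) x := by
  have hg' : g (x + π) = g (x - π) := by
    rw [← hp (x - π)]; ring_nf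
  refine ((hasDerivAt_windowConv_expPair hg μ α β (-π) 0 x).add
    (hasDerivAt_windowConv_expPair hg μ (-β) (-α) 0 π x)).congr_deriv ?_
  rw [evenConv, show μ * -β = -μ * β by ring, show -μ * -α = μ * α by ring]
  simp only [expPair_neg, neg_zero, expPair_zero, add_zero, hg', ← sub_eq_add_neg]
  simp only [expPair]
  ring

lemma hasDerivAt_evenConv (hg : Continuous g) (hp : Periodic g (2 * π)) (μ α β x : ℝ) :
    HasDerivAt (evenConv μ α β g) (oddConv μ (μ * α) (-μ * β) g x) x := by
  have hg' : g (x + π) = g (x - π) := by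
    rw [← hp (x - π)]; ring_nf
  refine ((hasDerivAt_windowConv_expPair hg μ α β (-π) 0 x).add
    (hasDerivAt_windowConv_expPair hg μ β α 0 π x)).congr_deriv ?_
  rw [oddConv, show -(-μ * β) = μ * β by ring, show -(μ * α) = -μ * α by ring]
  simp only [expPair_neg, neg_zero, expPair_zero, add_zero, hg', ← sub_eq_add_neg]
  ring

end OddEvenConv

lemma wrap_eq_self {x : ℝ} (hx : x ∈ Ico (-π) π) : wrap x = x := by
  have hfract : Int.fract ((x + π) / (2 * π)) = (x + π) / (2 * π) := by
    rw [Int.fract_eq_self, div_lt_one (by positivity)]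
    exact ⟨div_nonneg (by linarith [hx.1]) (by positivity), by linarith [hx.2]⟩
  rw [wrap, hfract]
  field_simp
  ring

lemma perKernel_periodic (L : ℝ) : Periodic (perKernel L) (2 * π) := fun x => by
  have h : (x + 2 * π + π) / (2 * π) = (x + π) / (2 * π) + (1 : ℤ) := by
    push_cast; field_simp; ring
  rw [perKernel, perKernel, wrap, wrap, h, Int.fract_add_intCast]

noncomputable def kernelCoeffs (L : ℝ) : ℝ × ℝ :=
  (-(exp (2 * π / L) - 1)⁻¹, exp (2 * π / L) * (exp (2 * π / L) - 1)⁻¹)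

section Kernel

variable {L : ℝ}

lemma exp_two_pi_div_ne_one (hL : L ≠ 0) : exp (2 * π / L) - 1 ≠ 0 := by
  rw [sub_ne_zero, Ne, exp_eq_one_iff]
  positivity

lemma kernelCoeffs_sum (hL : L ≠ 0) : (kernelCoeffs L).1 + (kernelCoeffs L).2 = 1 := by
  have := exp_two_pi_div_ne_one hL
  simp only [kernelCoeffs]
  field_simp
  ring

lemma expPair_kernelCoeffs_pi :
    expPair L⁻¹ (kernelCoeffs L).1 (kernelCoeffs L).2 π = 0 := by
  have h : exp (2 * π / L) * exp (-L⁻¹ * π) = exp (L⁻¹ * π) := by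
    rw [← exp_add]; ring_nf
  simp only [expPair, kernelCoeffs]
  linear_combination (exp (2 * π / L) - 1)⁻¹ * h

lemma repKernel_eq_expPair {s : ℝ} (hs : 0 < s) :
    repKernel L s = expPair L⁻¹ (kernelCoeffs L).1 (kernelCoeffs L).2 s := by
  have h : exp ((2 * π - s) / L) = exp (2 * π / L) * exp (-L⁻¹ * s) := by
    rw [← exp_add]; ring_nf
  rw [repKernel, sign_of_pos hs, abs_of_pos hs, h, expPair, kernelCoeffs, div_eq_inv_mul s]
  ring

lemma perKernel_eq_expPair {s : ℝ} (hs : s ∈ Ioo 0 π) :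
    perKernel L s = expPair L⁻¹ (kernelCoeffs L).1 (kernelCoeffs L).2 s := by
  rw [perKernel, wrap_eq_self ⟨by linarith [hs.1, pi_pos], hs.2⟩, repKernel_eq_expPair hs.1]

lemma perKernel_eq_expPair_of_neg {s : ℝ} (hs : s ∈ Ioo (-π) 0) :
    perKernel L s = expPair L⁻¹ (-(kernelCoeffs L).2) (-(kernelCoeffs L).1) s := by
  have hodd : repKernel L s = -repKernel L (-s) := by
    simp only [repKernel, Real.sign_neg, abs_neg]; ring
  rw [perKernel, wrap_eq_self ⟨hs.1.le, hs.2.trans pi_pos⟩, hodd,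
    repKernel_eq_expPair (neg_pos.2 hs.2), expPair_neg]
  simp only [expPair]
  ring

end Kernel

noncomputable def kernelConv (L : ℝ) (g : ℝ → ℝ) (x : ℝ) : ℝ :=
  ∫ y in (-π)..π, perKernel L (x - y) * g y

section KernelConv

variable {L : ℝ} {g : ℝ → ℝ}

lemma kernelConv_eq_oddConv (hg : Continuous g) (hp : Periodic g (2 * π)) :
    kernelConv L g = oddConv L⁻¹ (kernelCoeffs L).1 (kernelCoeffs L).2 g := by
  ext x
  have hπ := pi_pos
  have hper : Periodic (fun y => perKernel L (x - y) * g y) (2 * π) := fun y => by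
    dsimp only
    rw [show x - (y + 2 * π) = x - y - 2 * π by ring, (perKernel_periodic L).sub_eq, hp]
  have hleft : EqOn (fun y => expPair L⁻¹ (kernelCoeffs L).1 (kernelCoeffs L).2 (x - y) * g y)
      (fun y => perKernel L (x - y) * g y) (uIoo (x + -π) (x + 0)) := by
    intro y hy
    rw [uIoo_of_le (by linarith)] at hy
    dsimp only
    rw [perKernel_eq_expPair (s := x - y) ⟨by linarith [hy.2], by linarith [hy.1]⟩]
  have hright : EqOn
      (fun y => expPair L⁻¹ (-(kernelCoeffs L).2) (-(kernelCoeffs L).1) (x - y) * g y)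
      (fun y => perKernel L (x - y) * g y) (uIoo (x + 0) (x + π)) := by
    intro y hy
    rw [uIoo_of_le (by linarith)] at hy
    dsimp only
    rw [perKernel_eq_expPair_of_neg (s := x - y) ⟨by linarith [hy.2], by linarith [hy.1]⟩]
  calc kernelConv L g x = ∫ y in (x + -π)..(x + -π + 2 * π), perKernel L (x - y) * g y := by
        rw [kernelConv, ← hper.intervalIntegral_add_eq (-π), show -π + 2 * π = π by ring]
    _ = (∫ y in (x + -π)..(x + 0), perKernel L (x - y) * g y)
          + ∫ y in (x + 0)..(x + π), perKernel L (x - y) * g y := by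
        rw [show x + -π + 2 * π = x + π by ring, integral_add_adjacent_intervals
          ((Continuous.intervalIntegrable (by fun_prop) _ _).congr_uIoo hleft)
          ((Continuous.intervalIntegrable (by fun_prop) _ _).congr_uIoo hright)]
    _ = oddConv L⁻¹ (kernelCoeffs L).1 (kernelCoeffs L).2 g x := by
        rw [← integral_congr_uIoo hleft, ← integral_congr_uIoo hright]
        rfl

lemma kernelConv_periodic (hg : Continuous g) (hp : Periodic g (2 * π)) :
    Periodic (kernelConv L g) (2 * π) := by
  rw [kernelConv_eq_oddConv hg hp]
  exact oddConv_periodic hp _ _ _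

lemma exists_hasDerivAt_kernelConv (hL : L ≠ 0) (hg : Continuous g) (hp : Periodic g (2 * π)) :
    ∃ W : ℝ → ℝ, Periodic W (2 * π) ∧ ∀ x,
      HasDerivAt (kernelConv L g) (2 * g x + W x) x ∧
        HasDerivAt W (kernelConv L g x / L ^ 2) x := by
  rw [kernelConv_eq_oddConv hg hp]
  refine ⟨evenConv L⁻¹ (L⁻¹ * (kernelCoeffs L).1) (-L⁻¹ * (kernelCoeffs L).2) g,
    evenConv_periodic hp _ _ _, fun x => ⟨?_, ?_⟩⟩
  · refine (hasDerivAt_oddConv hg hp _ _ _ x).congr_deriv ?_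
    rw [kernelCoeffs_sum hL, expPair_kernelCoeffs_pi]
    ring
  · refine (hasDerivAt_evenConv hg hp _ _ _ x).congr_deriv ?_
    rw [show L⁻¹ * (L⁻¹ * (kernelCoeffs L).1) = (L ^ 2)⁻¹ * (kernelCoeffs L).1 by ring,
      show -L⁻¹ * (-L⁻¹ * (kernelCoeffs L).2) = (L ^ 2)⁻¹ * (kernelCoeffs L).2 by ring,
      oddConv_const_mul, inv_mul_eq_div]

lemma integral_kernelConv (hL : L ≠ 0) (hg : Continuous g) (hp : Periodic g (2 * π)) :
    ∫ x in (-π)..π, kernelConv L g x = 0 := by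
  obtain ⟨W, hWp, hd⟩ := exists_hasDerivAt_kernelConv hL hg hp
  have hcont : Continuous (kernelConv L g) :=
    continuous_iff_continuousAt.2 fun x => (hd x).1.continuousAt
  have hW : ∫ x in (-π)..π, kernelConv L g x / L ^ 2 = 0 :=
    hWp.integral_deriv_eq_zero (fun x => (hd x).2) ((hcont.div_const _).intervalIntegrable _ _)
  rwa [intervalIntegral.integral_div, div_eq_zero_iff, or_iff_left (by positivity)] at hW

end KernelConv

section Density

variable {D L : ℝ} {ρ : ℝ → ℝ}

lemma contDiff_logDeriv (hreg : ContDiff ℝ 2 ρ) (hne : ∀ x, ρ x ≠ 0) :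
    ContDiff ℝ 1 (logDeriv ρ) := by
  have hderiv : ContDiff ℝ 1 (deriv ρ) := ((contDiff_succ_iff_deriv (n := 1)).1 hreg).2.2
  exact hderiv.div (hreg.of_le one_le_two) hne

lemma hasDerivAt_log_comp (hd : Differentiable ℝ ρ) (hne : ∀ x, ρ x ≠ 0) (x : ℝ) :
    HasDerivAt (fun x => log (ρ x)) (logDeriv ρ x) x :=
  (hd x).hasDerivAt.log (hne x)

lemma integral_logDeriv (hper : Periodic ρ (2 * π)) (hne : ∀ x, ρ x ≠ 0)
    (hreg : ContDiff ℝ 1 ρ) : ∫ x in (-π)..π, logDeriv ρ x = 0 := by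
  refine Periodic.integral_deriv_eq_zero (fun x => by simp only [hper x])
    (hasDerivAt_log_comp (hreg.differentiable one_ne_zero) hne) ?_
  exact ((hreg.continuous_deriv le_rfl).div hreg.continuous hne).intervalIntegrable _ _

noncomputable def leaderDensity (D L : ℝ) (ρ : ℝ → ℝ) (c x : ℝ) : ℝ :=
  D / 2 * deriv (logDeriv ρ) x - D / (2 * L ^ 2) * log (ρ x) + c

/-- The function `h` of the paper. -/
noncomputable def massThreshold (D L : ℝ) (ρ : ℝ → ℝ) (x : ℝ) : ℝ :=
  -π * D * deriv (logDeriv ρ) x + π * D / L ^ 2 * log (ρ x)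
    - D * (∫ y in (-π)..π, log (ρ y)) / (2 * L ^ 2)

lemma continuous_leaderDensity (hreg : ContDiff ℝ 2 ρ) (hne : ∀ x, ρ x ≠ 0) (c : ℝ) :
    Continuous (leaderDensity D L ρ c) := by
  have := (contDiff_logDeriv hreg hne).continuous_deriv le_rfl
  have := hreg.continuous.log hne
  unfold leaderDensity
  fun_prop

lemma continuous_massThreshold (hreg : ContDiff ℝ 2 ρ) (hne : ∀ x, ρ x ≠ 0) :
    Continuous (massThreshold D L ρ) := by
  have := (contDiff_logDeriv hreg hne).continuous_deriv le_rfl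
  have := hreg.continuous.log hne
  unfold massThreshold
  fun_prop

lemma leaderDensity_periodic (hper : Periodic ρ (2 * π)) (c : ℝ) :
    Periodic (leaderDensity D L ρ c) (2 * π) :=
  fun x => by simp only [leaderDensity, hper.logDeriv.deriv x, hper x]

lemma integral_leaderDensity (hper : Periodic ρ (2 * π)) (hreg : ContDiff ℝ 2 ρ)
    (hne : ∀ x, ρ x ≠ 0) (c : ℝ) :
    ∫ x in (-π)..π, leaderDensity D L ρ c x
      = 2 * π * c - D / (2 * L ^ 2) * ∫ x in (-π)..π, log (ρ x) := by
  have hq := contDiff_logDeriv hreg hne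
  have hint : ∫ x in (-π)..π, deriv (logDeriv ρ) x = 0 :=
    hper.logDeriv.integral_deriv_eq_zero
      (fun x => (hq.differentiable one_ne_zero x).hasDerivAt)
      ((hq.continuous_deriv le_rfl).intervalIntegrable _ _)
  have h₁ : IntervalIntegrable (fun x => D / 2 * deriv (logDeriv ρ) x) volume (-π) π :=
    ((hq.continuous_deriv le_rfl).const_mul _).intervalIntegrable _ _
  have h₂ : IntervalIntegrable (fun x => D / (2 * L ^ 2) * log (ρ x)) volume (-π) π :=
    ((hreg.continuous.log hne).const_mul _).intervalIntegrable _ _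
  simp only [leaderDensity]
  rw [integral_add (h₁.sub h₂) intervalIntegrable_const, integral_sub h₁ h₂, integral_const_mul,
    integral_const_mul, hint, intervalIntegral.integral_const, smul_eq_mul]
  ring

lemma exists_integral_leaderDensity_eq (hper : Periodic ρ (2 * π)) (hreg : ContDiff ℝ 2 ρ)
    (hne : ∀ x, ρ x ≠ 0) (m : ℝ) : ∃ c, ∫ x in (-π)..π, leaderDensity D L ρ c x = m := by
  refine ⟨(m + D / (2 * L ^ 2) * ∫ x in (-π)..π, log (ρ x)) / (2 * π), ?_⟩
  rw [integral_leaderDensity hper hreg hne]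
  field_simp
  ring

lemma two_pi_mul_leaderDensity (hper : Periodic ρ (2 * π)) (hreg : ContDiff ℝ 2 ρ)
    (hne : ∀ x, ρ x ≠ 0) (c x : ℝ) :
    2 * π * leaderDensity D L ρ c x
      = (∫ y in (-π)..π, leaderDensity D L ρ c y) - massThreshold D L ρ x := by
  rw [integral_leaderDensity hper hreg hne, leaderDensity, massThreshold]
  ring

lemma leaderDensity_nonneg_iff (hper : Periodic ρ (2 * π)) (hreg : ContDiff ℝ 2 ρ)
    (hne : ∀ x, ρ x ≠ 0) (c : ℝ) :
    (∀ x, 0 ≤ leaderDensity D L ρ c x)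
      ↔ sSup (massThreshold D L ρ '' Icc (-π) π) ≤ ∫ x in (-π)..π, leaderDensity D L ρ c x := by
  have hπ := pi_pos
  rw [csSup_le_iff (isCompact_Icc.bddAbove_image (continuous_massThreshold hreg hne).continuousOn)
    ((nonempty_Icc.2 (by linarith)).image _), forall_mem_image]
  constructor
  · intro h x _
    nlinarith [h x, two_pi_mul_leaderDensity (D := D) (L := L) hper hreg hne c x]
  · intro h x
    obtain ⟨y, hy, hxy⟩ := (leaderDensity_periodic hper c).exists_mem_Ico (by positivity) x (-π)
    rw [hxy]
    have := h ⟨hy.1, by linarith [hy.2]⟩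
    nlinarith [two_pi_mul_leaderDensity (D := D) (L := L) hper hreg hne c y]

end Density

section SteadyState

variable {D L MF : ℝ} {ρ ρL : ℝ → ℝ}

lemma exists_flux_eq_of_steadyState {V : ℝ → ℝ} (hMF : MF ≠ 0) (hreg : ContDiff ℝ 2 ρ)
    (hV : Differentiable ℝ V)
    (h : ∀ x, deriv (fun z => MF * ρ z * V z) x = D * deriv (deriv fun z => MF * ρ z) x) :
    ∃ k, ∀ x, ρ x * V x - D * deriv ρ x = k := by
  have hd₁ : Differentiable ℝ ρ := hreg.differentiable two_ne_zero
  have hd₂ : Differentiable ℝ (deriv ρ) :=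
    ((contDiff_succ_iff_deriv (n := 1)).1 hreg).2.2.differentiable one_ne_zero
  have hflux : Differentiable ℝ fun x => ρ x * V x - D * deriv ρ x :=
    (hd₁.mul hV).sub (hd₂.const_mul D)
  refine ⟨ρ 0 * V 0 - D * deriv ρ 0, fun x => is_const_of_deriv_eq_zero hflux (fun x => ?_) x 0⟩
  have hx := h x
  simp only [mul_assoc, deriv_const_mul_field'] at hx
  rw [deriv_fun_sub (f := fun x => ρ x * V x) (hd₁.mul hV x) (hd₂.const_mul D x),
    deriv_const_mul_field',
    mul_left_cancel₀ hMF (hx.trans (mul_left_comm _ _ _)), sub_self]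

lemma eq_logDeriv_of_flux_eq {V : ℝ → ℝ} {k : ℝ} (hper : Periodic ρ (2 * π))
    (hpos : ∀ x, 0 < ρ x) (hreg : ContDiff ℝ 1 ρ)
    (hmean : ∫ x in (-π)..π, V x = 0) (hflux : ∀ x, ρ x * V x - D * deriv ρ x = k) :
    V = fun x => D * logDeriv ρ x := by
  have hne x : ρ x ≠ 0 := (hpos x).ne'
  have hVk x : V x = k * (ρ x)⁻¹ + D * logDeriv ρ x := by
    rw [logDeriv_apply, ← hflux x]
    field_simp [hne x]
    ring
  have hinv : Continuous fun x => (ρ x)⁻¹ := hreg.continuous.inv₀ hne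
  have hlog : Continuous (logDeriv ρ) := (hreg.continuous_deriv le_rfl).div hreg.continuous hne
  have hk : k * ∫ x in (-π)..π, (ρ x)⁻¹ = 0 := by
    rw [← hmean, funext hVk, integral_add ((hinv.const_mul k).intervalIntegrable _ _)
      ((hlog.const_mul D).intervalIntegrable _ _), integral_const_mul, integral_const_mul,
      integral_logDeriv hper hne hreg, mul_zero, add_zero]
  have hpos_int : 0 < ∫ x in (-π)..π, (ρ x)⁻¹ :=
    intervalIntegral_pos_of_pos (hinv.intervalIntegrable _ _) (fun x => inv_pos.2 (hpos x))
      (by linarith [pi_pos])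
  funext x
  rw [hVk, (mul_eq_zero.1 hk).resolve_right hpos_int.ne', zero_mul, zero_add]

lemma steadyState_iff_kernelConv_eq (hL : L ≠ 0) (hMF : MF ≠ 0) (hper : Periodic ρ (2 * π))
    (hpos : ∀ x, 0 < ρ x) (hreg : ContDiff ℝ 2 ρ) (hc : Continuous ρL)
    (hp : Periodic ρL (2 * π)) :
    (∀ x, deriv (fun z => MF * ρ z * kernelConv L ρL z) x = D * deriv (deriv fun z => MF * ρ z) x)
      ↔ kernelConv L ρL = fun x => D * logDeriv ρ x := by
  obtain ⟨W, -, hd⟩ := exists_hasDerivAt_kernelConv hL hc hp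
  have hV : Differentiable ℝ (kernelConv L ρL) := fun x => (hd x).1.differentiableAt
  constructor
  · intro h
    obtain ⟨k, hk⟩ := exists_flux_eq_of_steadyState hMF hreg hV h
    exact eq_logDeriv_of_flux_eq hper hpos (hreg.of_le one_le_two)
      (integral_kernelConv hL hc hp) hk
  · intro hVeq x
    have hflux : (fun z => MF * ρ z * kernelConv L ρL z) = fun z => MF * D * deriv ρ z := by
      funext z
      simp only [hVeq, logDeriv_apply]
      field_simp [(hpos z).ne']
    rw [hflux, deriv_const_mul_field', deriv_const_mul_field', deriv_const_mul_field']
    ring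

lemma eq_leaderDensity_of_kernelConv_eq (hL : L ≠ 0) (hreg : ContDiff ℝ 2 ρ)
    (hne : ∀ x, ρ x ≠ 0) (hc : Continuous ρL) (hp : Periodic ρL (2 * π))
    (hV : kernelConv L ρL = fun x => D * logDeriv ρ x) : ∃ c, ρL = leaderDensity D L ρ c := by
  obtain ⟨W, -, hd⟩ := exists_hasDerivAt_kernelConv hL hc hp
  have hq := (contDiff_logDeriv hreg hne).differentiable one_ne_zero
  have hρL x : 2 * ρL x + W x = D * deriv (logDeriv ρ) x :=
    (hd x).1.unique (by rw [hV]; exact (hq x).hasDerivAt.const_mul D)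
  have hW x : HasDerivAt (fun x => W x - D / L ^ 2 * log (ρ x)) 0 x := by
    refine ((hd x).2.sub ((hasDerivAt_log_comp (hreg.differentiable two_ne_zero) hne x).const_mul
      (D / L ^ 2))).congr_deriv ?_
    rw [hV]
    ring
  refine ⟨-(W 0 - D / L ^ 2 * log (ρ 0)) / 2, funext fun x => ?_⟩
  have hconst := is_const_of_deriv_eq_zero (fun x => (hW x).differentiableAt)
    (fun x => (hW x).deriv) x 0
  rw [leaderDensity]
  linear_combination (hρL x - hconst) / 2

lemma kernelConv_leaderDensity (hL : L ≠ 0) (hper : Periodic ρ (2 * π)) (hreg : ContDiff ℝ 2 ρ)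
    (hne : ∀ x, ρ x ≠ 0) (c : ℝ) :
    kernelConv L (leaderDensity D L ρ c) = fun x => D * logDeriv ρ x := by
  obtain ⟨W, -, hd⟩ := exists_hasDerivAt_kernelConv hL (continuous_leaderDensity hreg hne c)
    (leaderDensity_periodic hper c)
  have hq := (contDiff_logDeriv hreg hne).differentiable one_ne_zero
  have hlog := hasDerivAt_log_comp (hreg.differentiable two_ne_zero) hne
  have hzero := Periodic.eq_zero_of_hasDerivAt_sq_mul (μ := L⁻¹) (T := 2 * π)
    (u := fun x => kernelConv L (leaderDensity D L ρ c) x - D * logDeriv ρ x)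
    (z := fun x => W x - D / L ^ 2 * log (ρ x) + 2 * c)
    (fun x => by simp only [kernelConv_periodic (continuous_leaderDensity hreg hne c)
      (leaderDensity_periodic hper c) x, hper.logDeriv x])
    (inv_ne_zero hL) (by positivity)
    (fun x => ((hd x).1.sub ((hq x).hasDerivAt.const_mul D)).congr_deriv
      (by rw [leaderDensity]; field_simp; ring))
    (fun x => (((hd x).2.sub ((hlog x).const_mul _)).add_const _).congr_deriv
      (by field_simp))
  funext x
  linear_combination hzero x

lemma steadyState_iff_eq_leaderDensity (hL : L ≠ 0) (hMF : MF ≠ 0)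
    (hper : Periodic ρ (2 * π)) (hpos : ∀ x, 0 < ρ x) (hreg : ContDiff ℝ 2 ρ)
    (hc : Continuous ρL) (hp : Periodic ρL (2 * π)) :
    (∀ x, deriv (fun z => MF * ρ z * kernelConv L ρL z) x = D * deriv (deriv fun z => MF * ρ z) x)
      ↔ ∃ c, ρL = leaderDensity D L ρ c := by
  have hne x : ρ x ≠ 0 := (hpos x).ne'
  rw [steadyState_iff_kernelConv_eq hL hMF hper hpos hreg hc hp]
  refine ⟨eq_leaderDensity_of_kernelConv_eq hL hreg hne hc hp, ?_⟩
  rintro ⟨c, rfl⟩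
  exact kernelConv_leaderDensity hL hper hreg hne c

end SteadyState

theorem feasibility_iff_mass_bound_general
    (D L MF : ℝ) (hL : 0 < L) (hMF : MF ∈ Set.Ioo (0 : ℝ) 1)
    (ρhat : ℝ → ℝ)
    (hper : Function.Periodic ρhat (2 * Real.pi))
    (hpos : ∀ x, 0 < ρhat x)
    (hreg : ContDiff ℝ 2 ρhat) :
    (∃ ρL : ℝ → ℝ, Continuous ρL ∧ Function.Periodic ρL (2 * Real.pi) ∧
        (∀ x, 0 ≤ ρL x) ∧
        (∫ x in (-Real.pi)..Real.pi, ρL x) = 1 - MF ∧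
        (∀ x, deriv
            (fun z => (MF * ρhat z) *
              ∫ y in (-Real.pi)..Real.pi, perKernel L (z - y) * ρL y) x
          = D * deriv (deriv (fun z => MF * ρhat z)) x))
    ↔ sSup ((fun x =>
          -Real.pi * D * deriv (fun z => deriv ρhat z / ρhat z) x
            + (Real.pi * D / L ^ 2) * Real.log (ρhat x)
            - D * (∫ y in (-Real.pi)..Real.pi, Real.log (ρhat y)) / (2 * L ^ 2)) ''
          Set.Icc (-Real.pi) Real.pi) ≤ 1 - MF := by
  have hne x : ρhat x ≠ 0 := (hpos x).ne'
  have hsteady := fun ρL => steadyState_iff_eq_leaderDensity (D := D) (ρL := ρL) hL.ne' hMF.1.ne'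
    hper hpos hreg
  constructor
  · rintro ⟨ρL, hc, hp, hnn, hmass, hss⟩
    obtain ⟨c, rfl⟩ := (hsteady ρL hc hp).1 hss
    exact hmass ▸ (leaderDensity_nonneg_iff hper hreg hne c).1 hnn
  · intro hbound
    obtain ⟨c, hmass⟩ := exists_integral_leaderDensity_eq (D := D) (L := L) hper hreg hne (1 - MF)
    have hc := continuous_leaderDensity (D := D) (L := L) hreg hne c
    have hp := leaderDensity_periodic (D := D) (L := L) hper c
    exact ⟨_, hc, hp, (leaderDensity_nonneg_iff hper hreg hne c).2 (hmass ▸ hbound), hmass,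
      (hsteady _ hc hp).2 ⟨c, rfl⟩⟩

/-- Theorem 1 of the paper (feasibility): given a normalized desired followers'
density `ρ̂`, there exists a nonnegative, 2π-periodic leaders' density of mass
`M^L = 1 - M^F` making `ρ̄^F = M^F ρ̂` a steady state of the followers'
convection–diffusion equation if and only if `M^L ≥ max_{x∈[-π,π]} h(x)`. -/
theorem feasibility_iff_mass_bound
    (D L MF : ℝ) (hD : 0 < D) (hL : 0 < L) (hMF : MF ∈ Set.Ioo (0 : ℝ) 1)
    (ρhat : ℝ → ℝ)
    (hper : Function.Periodic ρhat (2 * Real.pi))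
    (hpos : ∀ x, 0 < ρhat x)
    (hreg : ContDiff ℝ 2 ρhat)
    (hnorm : (∫ x in (-Real.pi)..Real.pi, ρhat x) = 1) :
    (∃ ρL : ℝ → ℝ, Continuous ρL ∧ Function.Periodic ρL (2 * Real.pi) ∧
        (∀ x, 0 ≤ ρL x) ∧
        (∫ x in (-Real.pi)..Real.pi, ρL x) = 1 - MF ∧
        (∀ x, deriv
            (fun z => (MF * ρhat z) *
              ∫ y in (-Real.pi)..Real.pi, perKernel L (z - y) * ρL y) x
          = D * deriv (deriv (fun z => MF * ρhat z)) x))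
    ↔ sSup ((fun x =>
          -Real.pi * D * deriv (fun z => deriv ρhat z / ρhat z) x
            + (Real.pi * D / L ^ 2) * Real.log (ρhat x)
            - D * (∫ y in (-Real.pi)..Real.pi, Real.log (ρhat y)) / (2 * L ^ 2)) ''
          Set.Icc (-Real.pi) Real.pi) ≤ 1 - MF :=
  feasibility_iff_mass_bound_general D L MF hL hMF ρhat hper hpos hreg
end

section
/- Let L > 0 and x ∈ [−π, π]. Then the series Σ_{k ∈ ℤ} sgn(x + 2kπ)·exp(−|x + 2kπ|/L) converges absolutely and its sum equals sgn(x)/(exp(2π/L) − 1) · [exp((2π − |x|)/L) − exp(|x|/L)], where sgn(0) = 0. -/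
/-!
For `|x| < T` every shift `x + kT` with `k ≥ 1` is positive and every one with `k ≤ -1` is
negative, so the two tails of the periodized kernel are geometric series of ratio `e^{-T/L}`.
Summing them shows that the periodization is the kernel itself plus the smooth odd correction
`(e^{-x/L} - e^{x/L}) / (e^{T/L} - 1)`; the closed form follows by splitting on the sign of `x`.
-/

open Real

noncomputable def repulsiveKernel (L y : ℝ) : ℝ := sign y * exp (-|y| / L)

lemma repulsiveKernel_of_pos {L y : ℝ} (hy : 0 < y) : repulsiveKernel L y = exp (-y / L) := by
  rw [repulsiveKernel, sign_of_pos hy, abs_of_pos hy, one_mul]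

lemma repulsiveKernel_of_neg {L y : ℝ} (hy : y < 0) : repulsiveKernel L y = -exp (y / L) := by
  rw [repulsiveKernel, sign_of_neg hy, abs_of_neg hy, neg_neg, neg_one_mul]

lemma hasSum_exp_sub_succ_mul {r : ℝ} (hr : 0 < r) (a : ℝ) :
    HasSum (fun n : ℕ => exp (a - (n + 1) * r)) (exp a / (exp r - 1)) := by
  have hq : exp (-r) < 1 := exp_lt_one_iff.mpr (neg_lt_zero.mpr hr)
  have hE : exp r - 1 ≠ 0 := (sub_pos.mpr (one_lt_exp_iff.mpr hr)).ne'
  have hsum : exp (a - r) * (1 - exp (-r))⁻¹ = exp a / (exp r - 1) := by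
    rw [exp_sub, exp_neg]
    field_simp
  rw [← hsum]
  refine ((hasSum_geometric_of_lt_one (exp_pos _).le hq).mul_left _).congr_fun fun n => ?_
  rw [← exp_nat_mul, ← exp_add]
  ring_nf

theorem hasSum_repulsiveKernel_add_int_mul {L T x : ℝ} (hL : 0 < L) (hT : 0 < T)
    (hx : |x| < T) :
    HasSum (fun k : ℤ => repulsiveKernel L (x + k * T))
      (repulsiveKernel L x + (exp (-x / L) - exp (x / L)) / (exp (T / L) - 1)) := by
  obtain ⟨hxl, hxr⟩ := abs_lt.mp hx
  have hright : HasSum (fun n : ℕ => repulsiveKernel L (x + ((n + 1 : ℤ) : ℝ) * T))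
      (exp (-x / L) / (exp (T / L) - 1)) := by
    refine (hasSum_exp_sub_succ_mul (div_pos hT hL) (-x / L)).congr_fun fun n => ?_
    have hpos : 0 < x + ((n + 1 : ℤ) : ℝ) * T := by
      push_cast; nlinarith [n.cast_nonneg (α := ℝ)]
    rw [repulsiveKernel_of_pos hpos]
    push_cast
    ring_nf
  have hleft : HasSum (fun n : ℕ => repulsiveKernel L (x + ((-(n + 1) : ℤ) : ℝ) * T))
      (-(exp (x / L) / (exp (T / L) - 1))) := by
    refine (hasSum_exp_sub_succ_mul (div_pos hT hL) (x / L)).neg.congr_fun fun n => ?_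
    have hneg : x + ((-(n + 1) : ℤ) : ℝ) * T < 0 := by
      push_cast; nlinarith [n.cast_nonneg (α := ℝ)]
    rw [repulsiveKernel_of_neg hneg]
    push_cast
    ring_nf
  have h := hright.of_add_one_of_neg_add_one
    (f := fun k : ℤ => repulsiveKernel L (x + k * T)) hleft
  rw [Int.cast_zero, zero_mul, add_zero] at h
  convert h using 1
  ring

lemma repulsiveKernel_add_exp_sub_exp_div {L T : ℝ} (hL : 0 < L) (hT : 0 < T) (x : ℝ) :
    repulsiveKernel L x + (exp (-x / L) - exp (x / L)) / (exp (T / L) - 1)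
      = sign x / (exp (T / L) - 1) * (exp ((T - |x|) / L) - exp (|x| / L)) := by
  have hE : exp (T / L) - 1 ≠ 0 := (sub_pos.mpr (one_lt_exp_iff.mpr (div_pos hT hL))).ne'
  have hsplit : ∀ y, exp ((T - y) / L) = exp (T / L) * exp (-y / L) := fun y => by
    rw [← exp_add]; ring_nf
  rcases lt_trichotomy x 0 with hx | rfl | hx
  · rw [repulsiveKernel_of_neg hx, sign_of_neg hx, abs_of_neg hx, hsplit, neg_neg]
    field_simp
    ring
  · simp [repulsiveKernel]
  · rw [repulsiveKernel_of_pos hx, sign_of_pos hx, abs_of_pos hx, hsplit]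
    field_simp
    ring

/-- Appendix A of the paper (kernel periodization): the periodization
`Σ_{k∈ℤ} sgn(x + 2kπ) e^{-|x + 2kπ|/L}` of the non-periodic repulsive kernel
converges absolutely, with closed form
`sgn(x)/(e^{2π/L} - 1) · [e^{(2π-|x|)/L} - e^{|x|/L}]` for `x ∈ [-π, π]`. -/
theorem kernel_periodization
    (L : ℝ) (hL : 0 < L) (x : ℝ) (hx : x ∈ Set.Icc (-Real.pi) Real.pi) :
    Summable (fun k : ℤ =>
      |Real.sign (x + 2 * (k : ℝ) * Real.pi) *
        Real.exp (-|x + 2 * (k : ℝ) * Real.pi| / L)|) ∧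
    (∑' k : ℤ, Real.sign (x + 2 * (k : ℝ) * Real.pi) *
        Real.exp (-|x + 2 * (k : ℝ) * Real.pi| / L))
      = Real.sign x / (Real.exp (2 * Real.pi / L) - 1) *
          (Real.exp ((2 * Real.pi - |x|) / L) - Real.exp (|x| / L)) := by
  have hx' : |x| < 2 * π := (abs_le.mpr hx).trans_lt (by linarith [pi_pos])
  have h := hasSum_repulsiveKernel_add_int_mul hL two_pi_pos hx'
  have hk : ∀ k : ℤ, (k : ℝ) * (2 * π) = 2 * k * π := fun k => by ring
  simp only [repulsiveKernel_add_exp_sub_exp_div hL two_pi_pos, hk] at h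
  exact ⟨h.summable.abs, h.tsum_eq⟩
end
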